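/- arXiv:2507.23090 — 2 statements merged into one kernel-verified Lean document; each statement's English description precedes it below -/
import Mathlib

section
/- Let (M, θ, g) be a K-contact sub-Riemannian manifold with Reeb field ξ, and suppose M/ξ is a smooth manifold such that pr : M → M/ξ is a surjective submersion whose differential restricted to D is a fiberwise isomorphism onto T(M/ξ). Then in adapted coordinates, the components of the horizontal connection ∇^g on D computed by Γ^{gk}_{ij} = (1/2) g^{kl}(e_i g_{lj} + e_j g_{li} − e_l g_{ij}) coincide with the Christoffel symbols of the Levi-Civita connection of the induced metric h = g_{ij} dx^i dx^j on M/ξ. -/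
section Aux

variable {m : ℕ}

/-- The coordinate projection as a continuous linear map. -/
noncomputable def projCLM (m : ℕ) :
    (Fin (2 * m + 1) → ℝ) →L[ℝ] (Fin (2 * m) → ℝ) :=
  ContinuousLinearMap.pi (fun i => ContinuousLinearMap.proj i.castSucc)

lemma projCLM_apply (x : Fin (2 * m + 1) → ℝ) (i : Fin (2 * m)) :
    projCLM m x i = x i.castSucc := rfl

lemma projCLM_single_castSucc (i : Fin (2 * m)) :
    projCLM m (Pi.single i.castSucc 1) = Pi.single i 1 := by
  funext j
  simp only [projCLM_apply, Pi.single_apply]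
  by_cases h : j = i
  · simp [h]
  · simp [h, fun hc => h (Fin.castSucc_injective _ hc)]

lemma projCLM_single_last :
    projCLM m (Pi.single (Fin.last (2 * m)) 1) = 0 := by
  funext j
  simp only [projCLM_apply, Pi.single_apply, Pi.zero_apply]
  rw [if_neg]
  exact (Fin.castSucc_lt_last j).ne

end Aux

/-- on a K-contact sub-Riemannian manifold whose orbit space `M/ξ` is a
manifold, in adapted coordinates (`ξ = ∂_{x^n}`, `n = 2m+1`, `proj` the coordinate
expression of `pr : M → M/ξ`), the components
`Γ^{gk}_{ij} = ½ g^{kl}(e_i g_{lj} + e_j g_{li} − e_l g_{ij})` of the horizontal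
connection `∇^g` (where `e_i = ∂_{x^i} − Γ^n_i ∂_{x^n}`) coincide with the Christoffel
symbols `½ h^{kl}(∂_i h_{lj} + ∂_j h_{li} − ∂_l h_{ij})` of the Levi-Civita connection of
the induced metric `h = g_{ij} dx^i dx^j` on `M/ξ`.  Here `H`, `Hinv` are the components
of `h` and of its inverse, and by the K-contact condition the components `G = H ∘ proj`
of `g` are independent of `x^n`. -/
theorem horizontal_connection_eq_leviCivita_of_induced_metric
    (m : ℕ)
    (proj : (Fin (2 * m + 1) → ℝ) → (Fin (2 * m) → ℝ))
    (hproj : ∀ x i, proj x i = x i.castSucc)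
    (H Hinv : Fin (2 * m) → Fin (2 * m) → (Fin (2 * m) → ℝ) → ℝ)
    (hH : ∀ i j, Differentiable ℝ (H i j))
    (G Ginv : Fin (2 * m) → Fin (2 * m) → (Fin (2 * m + 1) → ℝ) → ℝ)
    (hG : ∀ i j x, G i j x = H i j (proj x))
    (hGinv : ∀ i j x, Ginv i j x = Hinv i j (proj x))
    (Γn : Fin (2 * m) → (Fin (2 * m + 1) → ℝ) → ℝ) :
    ∀ x i j k,
      (1 / 2 : ℝ) * ∑ l, Ginv k l x *
        ((fderiv ℝ (G l j) x (Pi.single i.castSucc 1)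
            - Γn i x * fderiv ℝ (G l j) x (Pi.single (Fin.last (2 * m)) 1))
         + (fderiv ℝ (G l i) x (Pi.single j.castSucc 1)
            - Γn j x * fderiv ℝ (G l i) x (Pi.single (Fin.last (2 * m)) 1))
         - (fderiv ℝ (G i j) x (Pi.single l.castSucc 1)
            - Γn l x * fderiv ℝ (G i j) x (Pi.single (Fin.last (2 * m)) 1)))
      = (1 / 2 : ℝ) * ∑ l, Hinv k l (proj x) *
          (fderiv ℝ (H l j) (proj x) (Pi.single i 1)
           + fderiv ℝ (H l i) (proj x) (Pi.single j 1)
           - fderiv ℝ (H i j) (proj x) (Pi.single l 1)) := by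
  have hprojeq : proj = projCLM m := by
    funext x i; rw [hproj, projCLM_apply]
  have hGfun : ∀ i j, G i j = (H i j) ∘ (projCLM m) := by
    intro i j; funext x; rw [hG, hprojeq]; rfl
  have hfd : ∀ (a b : Fin (2 * m)) (x : Fin (2 * m + 1) → ℝ)
      (v : Fin (2 * m + 1) → ℝ),
      fderiv ℝ (G a b) x v = fderiv ℝ (H a b) (projCLM m x) (projCLM m v) := by
    intro a b x v
    rw [hGfun]
    rw [fderiv_comp x ((hH a b).differentiableAt) ((projCLM m).differentiableAt)]
    rw [(projCLM m).fderiv]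
    rfl
  intro x i j k
  have key : ∀ a b : Fin (2 * m),
      fderiv ℝ (G a b) x (Pi.single (Fin.last (2 * m)) 1) = 0 := by
    intro a b
    rw [hfd, projCLM_single_last, map_zero]
  congr 1
  apply Finset.sum_congr rfl
  intro l _
  rw [hGinv, hprojeq, key, key, key, hfd, hfd, hfd,
    projCLM_single_castSucc, projCLM_single_castSucc, projCLM_single_castSucc]
  ring
end

section
/- Let μ : [a,b] → M/ξ be a piecewise-smooth loop at p = pr(x). Then there exists a piecewise-smooth loop γ : [a,b] → M at x ∈ M with pr ∘ γ = μ. -/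
/-!
Cover the loop by finitely many intervals, each mapped into an open set over which `pr` has a
continuous section. Composing a section with a suitable time of the flow moves it through any
prescribed point of the fibre, because the flow preserves the fibres and is transitive on them;
so the sections can be chained into a lift starting at `x`. The lift ends in the fibre of `x`, and
sliding each point of the lift along its orbit, by a flow time interpolating linearly between
the times needed at the two ends, closes it into a loop at `x` without changing its projection.
-/

open Set Topology unitInterval

theorem ContinuousOn.if_le_of_Icc {α β : Type*} [LinearOrder α] [TopologicalSpace α]
    [OrderClosedTopology α] [TopologicalSpace β] {f g : α → β} {a b c : α}
    (hf : ContinuousOn f (Icc a b)) (hg : ContinuousOn g (Icc b c)) (hfg : f b = g b) :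
    ContinuousOn (fun t => if t ≤ b then f t else g t) (Icc a c) := by
  refine ((hf.congr fun t ht => if_pos ht.2).union_of_isClosed (hg.congr fun t ht => ?_)
    isClosed_Icc isClosed_Icc).mono Icc_subset_Icc_union_Icc
  split_ifs with htb
  · rw [le_antisymm htb ht.1, hfg]
  · rfl

section Lifting

variable {M N : Type*} [TopologicalSpace M] [TopologicalSpace N] {p : M → N}

/-- The neighbourhood `U` of `q` is the same for every point `y` of `p ⁻¹' U`: this is what lets
a single subdivision of a path serve for all steps of its lifting. -/
def HasLocalSectionsThrough (p : M → N) : Prop :=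
  ∀ q : N, ∃ U ∈ 𝓝 q, ∀ y, p y ∈ U →
    ∃ s : N → M, ContinuousOn s U ∧ s (p y) = y ∧ ∀ z ∈ U, p (s z) = z

theorem hasLocalSectionsThrough_of_transitive {ι : Type*} {φ : ι → M → M}
    (hφ : ∀ c, Continuous (φ c)) (hfiber : ∀ c y, p (φ c y) = p y)
    (htrans : ∀ y z, p y = p z → ∃ c, φ c y = z)
    (hsec : ∀ q : N, ∃ U ∈ 𝓝 q, ∃ s : N → M,
      ContinuousOn s U ∧ ∀ z ∈ U, p (s z) = z) :
    HasLocalSectionsThrough p := by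
  intro q
  obtain ⟨U, hU, s, hs, hps⟩ := hsec q
  refine ⟨U, hU, fun y hy => ?_⟩
  obtain ⟨c, hc⟩ := htrans (s (p y)) y (hps _ hy)
  exact ⟨φ c ∘ s, (hφ c).comp_continuousOn hs, hc,
    fun z hz => by rw [Function.comp_apply, hfiber, hps z hz]⟩

theorem HasLocalSectionsThrough.exists_lift (hp : HasLocalSectionsThrough p) (f : C(I, N))
    (y : M) (hy : p y = f 0) : ∃ g : C(I, M), g 0 = y ∧ ∀ t, p (g t) = f t := by
  choose U hU hsec using hp
  obtain ⟨t, ht0, hmono, ⟨m, hm⟩, hsub⟩ :=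
    exists_monotone_Icc_subset_open_cover_unitInterval (c := fun q => f ⁻¹' interior (U q))
      (fun q => isOpen_interior.preimage f.continuous)
      (fun s _ => mem_iUnion.mpr ⟨f s, mem_interior_iff_mem_nhds.mpr (hU _)⟩)
  suffices ∀ n, ∃ g : I → M,
      ContinuousOn g (Icc 0 (t n)) ∧ g 0 = y ∧ ∀ s ∈ Icc 0 (t n), p (g s) = f s by
    obtain ⟨g, hg, hg0, hgf⟩ := this m
    rw [hm m le_rfl] at hg hgf
    have hI : ∀ s : I, s ∈ Icc 0 1 := fun _ => ⟨nonneg', le_one'⟩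
    exact ⟨⟨g, continuousOn_univ.mp (hg.mono fun s _ => hI s)⟩, hg0, fun s => hgf s (hI s)⟩
  intro n
  induction n with
  | zero =>
    refine ⟨fun _ => y, continuousOn_const, rfl, fun s hs => ?_⟩
    rw [ht0, Icc_self, mem_singleton_iff] at hs
    rw [hs, hy]
  | succ n ih =>
    obtain ⟨g, hg, hg0, hgf⟩ := ih
    obtain ⟨q, hq⟩ := hsub n
    have hfU : MapsTo f (Icc (t n) (t (n + 1))) (U q) := fun s hs => interior_subset (hq hs)
    have htn : t n ∈ Icc 0 (t n) := ⟨nonneg', le_rfl⟩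
    obtain ⟨ψ, hψ, hψg, hψp⟩ :=
      hsec q (g (t n)) (hgf _ htn ▸ hfU ⟨le_rfl, hmono n.le_succ⟩)
    refine ⟨fun s => if s ≤ t n then g s else ψ (f s), ?_, by simp [hg0], fun s hs => ?_⟩
    · refine hg.if_le_of_Icc (hψ.comp f.continuous.continuousOn hfU) ?_
      rw [← hgf _ htn, hψg]
    · dsimp only
      split_ifs with h
      · exact hgf s ⟨hs.1, h⟩
      · exact hψp _ (hfU ⟨le_of_not_ge h, hs.2⟩)

end Lifting

theorem exists_path_with_projection_of_flow {M N : Type*} [TopologicalSpace M] {p : M → N}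
    {φ : ℝ → M → M} (hφ : Continuous fun q : ℝ × M => φ q.1 q.2)
    (hfiber : ∀ c y, p (φ c y) = p y)
    (htrans : ∀ y z, p y = p z → ∃ c, φ c y = z) (g : C(I, M)) {x₀ x₁ : M}
    (h₀ : p (g 0) = p x₀) (h₁ : p (g 1) = p x₁) :
    ∃ γ : Path x₀ x₁, ∀ t, p (γ t) = p (g t) := by
  obtain ⟨c₀, hc₀⟩ := htrans _ _ h₀
  obtain ⟨c₁, hc₁⟩ := htrans _ _ h₁
  refine ⟨{ toFun := fun t => φ ((1 - t) * c₀ + t * c₁) (g t)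
            continuous_toFun := hφ.comp ((by fun_prop : Continuous fun t : I =>
              (1 - (t : ℝ)) * c₀ + t * c₁).prodMk g.continuous)
            source' := by simpa using hc₀
            target' := by simpa using hc₁ }, fun t => hfiber _ _⟩

theorem loop_lifts_to_loop_general
    (M N : Type*) [TopologicalSpace M] [TopologicalSpace N]
    (pr : M → N) (hsurj : Function.Surjective pr)
    (φ : ℝ → M → M) (hφ : Continuous fun q : ℝ × M => φ q.1 q.2)
    (hfiber : ∀ t y, pr (φ t y) = pr y)
    (htrans : ∀ y z : M, pr y = pr z → ∃ t, φ t y = z)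
    (hsection : ∀ x : M, ∃ U ∈ nhds (pr x), ∃ s : N → M,
        ContinuousOn s U ∧ s (pr x) = x ∧ ∀ y ∈ U, pr (s y) = y)
    (x : M) (μ : Path (pr x) (pr x)) :
    ∃ γ : Path x x, ∀ t, pr (γ t) = μ t := by
  have hsections : HasLocalSectionsThrough pr := by
    refine hasLocalSectionsThrough_of_transitive
      (fun c => hφ.comp (continuous_const.prodMk continuous_id)) hfiber htrans fun q => ?_
    obtain ⟨y, rfl⟩ := hsurj q
    obtain ⟨U, hU, s, hs, -, hps⟩ := hsection y
    exact ⟨U, hU, s, hs, hps⟩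
  obtain ⟨g, hg0, hg⟩ := hsections.exists_lift μ.toContinuousMap x (by simp)
  obtain ⟨γ, hγ⟩ := exists_path_with_projection_of_flow hφ hfiber htrans g
    (x₁ := x) (by rw [hg0]) (by rw [hg]; simp)
  exact ⟨γ, fun t => (hγ t).trans (hg t)⟩

/-- lifting of loops from the orbit space.  Let `pr : M → M/ξ = N` be the
(continuous, surjective) orbit projection of the flow `φ` of the Reeb field `ξ`: the
flow preserves the fibers and acts transitively on each fiber.  Being a submersion whose
differential restricted to the contact distribution is a fiberwise isomorphism, `pr`
admits continuous local sections through every point (`hsection`).  Then every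
piecewise-smooth loop `μ : [a,b] → N` at `p = pr x` lifts to a loop `γ` at `x ∈ M`
with `pr ∘ γ = μ`. -/
theorem loop_lifts_to_loop
    (M N : Type*) [TopologicalSpace M] [TopologicalSpace N]
    (pr : M → N) (hpr : Continuous pr) (hsurj : Function.Surjective pr)
    (φ : ℝ → M → M) (hφ : Continuous fun q : ℝ × M => φ q.1 q.2)
    (hfiber : ∀ t y, pr (φ t y) = pr y)
    (htrans : ∀ y z : M, pr y = pr z → ∃ t, φ t y = z)
    (hsection : ∀ x : M, ∃ U ∈ nhds (pr x), ∃ s : N → M,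
        ContinuousOn s U ∧ s (pr x) = x ∧ ∀ y ∈ U, pr (s y) = y)
    (x : M) (μ : Path (pr x) (pr x)) :
    ∃ γ : Path x x, ∀ t, pr (γ t) = μ t :=
  loop_lifts_to_loop_general M N pr hsurj φ hφ hfiber htrans hsection x μ
end
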